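/- Assume V is symmetric positive definite with the completeness property and ρ is a probability density strictly positive on (0,∞). Define Δ(ψ) = ∫_0^∞ ⟨e^{tA}ψ, g⟩² ρ(t) dt for ψ ∈ ℝ^{2n}, where g is the standard basis vector of ℝ^{2n} in the direction of the first momentum coordinate (coordinate n+1). Then Δ is a positive definite quadratic form on ℝ^{2n}: Δ(ψ) = 0 implies ψ = 0, and consequently there exists a constant r > 0 such that Δ(ψ) ≥ r H(ψ) for all ψ ∈ ℝ^{2n}. -/

import Mathlib

open Matrix MeasureTheory

variable {n : ℕ}

/-- The Hamiltonian matrix `A = [[0, (1/M)I], [−V, 0]]` on `L = ℝ^n × ℝ^n`. -/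
noncomputable def hamMatrix (M : ℝ) (V : Matrix (Fin n) (Fin n) ℝ) :
    Matrix (Fin n ⊕ Fin n) (Fin n ⊕ Fin n) ℝ :=
  Matrix.fromBlocks 0 ((1 / M) • 1) (-V) 0

/-- The energy `H(q,p) = |p|²/(2M) + (1/2)⟨q, Vq⟩`. -/
noncomputable def energy (M : ℝ) (V : Matrix (Fin n) (Fin n) ℝ)
    (ψ : (Fin n ⊕ Fin n) → ℝ) : ℝ :=
  (1 / (2 * M)) * (∑ i, ψ (Sum.inr i) ^ 2) +
    (1 / 2) * ((fun i => ψ (Sum.inl i)) ⬝ᵥ V.mulVec (fun i => ψ (Sum.inl i)))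

/-- `Δ(ψ) = ∫_0^∞ ⟨e^{tA}ψ, g⟩² ρ(t) dt`, where `g` is the direction of the first momentum
coordinate. -/
noncomputable def Delta (hn : 0 < n) (M : ℝ) (V : Matrix (Fin n) (Fin n) ℝ) (ρ : ℝ → ℝ)
    (ψ : (Fin n ⊕ Fin n) → ℝ) : ℝ :=
  ∫ t in Set.Ioi (0 : ℝ),
    ((NormedSpace.exp (t • hamMatrix M V)).mulVec ψ ⬝ᵥ
      Pi.single (Sum.inr (⟨0, hn⟩ : Fin n)) 1) ^ 2 * ρ t

open Set Filter Topology NormedSpace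

/-!
The Hamiltonian flow `e^{tA}` conserves the energy `H`, a positive definite quadratic form,
so it is bounded; hence `Δ` is a continuous quadratic form. If `Δ(ψ) = 0`, the observed
momentum `t ↦ ⟨e^{tA}ψ, g⟩` vanishes on `(0, ∞)` because `ρ > 0` there, so all its derivatives
`⟨A^k ψ, g⟩` vanish at `0`. Since `A² = -(1/M) diag(V, V)`, even powers read off
`(V^k p)₁` and odd ones `(V^{k+1} q)₁`, and completeness forces `p = 0` and `V q = 0`.
Two positive definite quadratic forms on a finite-dimensional space are comparable by
compactness of the unit sphere.
-/

lemma exists_pos_mul_le_of_sq_homogeneous {E : Type*} [NormedAddCommGroup E] [NormedSpace ℝ E]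
    [FiniteDimensional ℝ E] {f g : E → ℝ} (hf : Continuous f) (hg : Continuous g)
    (hf_smul : ∀ (c : ℝ) x, f (c • x) = c ^ 2 * f x)
    (hg_smul : ∀ (c : ℝ) x, g (c • x) = c ^ 2 * g x)
    (hf_pos : ∀ x, x ≠ 0 → 0 < f x) :
    ∃ r : ℝ, 0 < r ∧ ∀ x, r * g x ≤ f x := by
  have hf0 : f 0 = 0 := by simpa using hf_smul 0 0
  have hg0 : g 0 = 0 := by simpa using hg_smul 0 0
  rcases subsingleton_or_nontrivial E with hE | hE
  · exact ⟨1, one_pos, fun x => by simp [Subsingleton.elim x 0, hf0, hg0]⟩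
  obtain ⟨u, hu, hmin⟩ := (isCompact_sphere (0 : E) 1).exists_isMinOn
    (NormedSpace.sphere_nonempty.2 zero_le_one) hf.continuousOn
  obtain ⟨v, hv, hmax⟩ := (isCompact_sphere (0 : E) 1).exists_isMaxOn
    (NormedSpace.sphere_nonempty.2 zero_le_one) hg.continuousOn
  have hfu : 0 < f u := hf_pos u (ne_zero_of_mem_unit_sphere ⟨u, hu⟩)
  set C := max (g v) 1
  have hC : 0 < C := lt_max_of_lt_right one_pos
  refine ⟨f u / C, by positivity, fun x => ?_⟩
  rcases eq_or_ne x 0 with rfl | hx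
  · simp [hf0, hg0]
  set y := ‖x‖⁻¹ • x
  have hy : y ∈ Metric.sphere (0 : E) 1 := by simp [y, norm_smul, hx]
  have hxy : x = ‖x‖ • y := (smul_inv_smul₀ (norm_ne_zero_iff.2 hx) x).symm
  have hgy : g y ≤ C := (hmax hy).trans (le_max_left _ _)
  have hfy : f u ≤ f y := hmin hy
  rw [hxy, hf_smul, hg_smul]
  calc f u / C * (‖x‖ ^ 2 * g y) ≤ f u / C * (‖x‖ ^ 2 * C) := by gcongr
    _ = ‖x‖ ^ 2 * f u := by field_simp
    _ ≤ ‖x‖ ^ 2 * f y := by gcongr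

lemma eqOn_zero_of_setIntegral_sq_mul_eq_zero {X : Type*} [TopologicalSpace X]
    [MeasurableSpace X] [OpensMeasurableSpace X] {μ : Measure X} [μ.IsOpenPosMeasure]
    {U : Set X} (hU : IsOpen U) {f w : X → ℝ} (hf : ContinuousOn f U) (hw : ∀ x ∈ U, 0 < w x)
    (hint : IntegrableOn (fun x => f x ^ 2 * w x) U μ)
    (h0 : ∫ x in U, f x ^ 2 * w x ∂μ = 0) : EqOn f 0 U := by
  have hae : (fun x => f x ^ 2 * w x) =ᵐ[μ.restrict U] 0 :=
    (integral_eq_zero_iff_of_nonneg_ae (ae_restrict_of_forall_mem hU.measurableSet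
      fun x hx => mul_nonneg (sq_nonneg _) (hw x hx).le) hint).1 h0
  refine μ.eqOn_open_of_ae_eq ?_ hU hf continuousOn_const
  filter_upwards [hae, ae_restrict_mem hU.measurableSet] with x hx hxU
  simpa [(hw x hxU).ne'] using hx

section MatrixFlow

variable {ι : Type*} [Fintype ι]

lemma dotProduct_mulVec_mulVec_transpose {R : Type*} [CommSemiring R] (B S : Matrix ι ι R)
    (x : ι → R) :
    (B *ᵥ x) ⬝ᵥ S *ᵥ (B *ᵥ x) = x ⬝ᵥ (Bᵀ * S * B) *ᵥ x := by
  rw [← mulVec_mulVec, ← mulVec_mulVec, dotProduct_mulVec x, vecMul_transpose]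

variable [DecidableEq ι]

open scoped Matrix.Norms.Operator in
lemma hasDerivAt_exp_smul_mulVec (A : Matrix ι ι ℝ) (v : ι → ℝ) (t : ℝ) :
    HasDerivAt (fun s : ℝ => exp (s • A) *ᵥ v) (exp (t • A) *ᵥ (A *ᵥ v)) t := by
  rw [mulVec_mulVec]
  exact ((mulVecBilin ℝ ℝ).flip v).toContinuousLinearMap.hasFDerivAt.comp_hasDerivAt t
    (hasDerivAt_exp_smul_const A t)

lemma continuous_exp_smul_mulVec (A : Matrix ι ι ℝ) (v : ι → ℝ) :
    Continuous fun t : ℝ => exp (t • A) *ᵥ v :=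
  continuous_iff_continuousAt.2 fun t => (hasDerivAt_exp_smul_mulVec A v t).continuousAt

lemma pow_mulVec_apply_eq_zero_of_eqOn_Ioi {A : Matrix ι ι ℝ} {v : ι → ℝ} {i : ι}
    (h : EqOn (fun t : ℝ => (exp (t • A) *ᵥ v) i) 0 (Ioi 0)) (k : ℕ) : (A ^ k *ᵥ v) i = 0 := by
  have hpos : ∀ k : ℕ, EqOn (fun t : ℝ => (exp (t • A) *ᵥ (A ^ k *ᵥ v)) i) 0 (Ioi 0) := by
    intro k
    induction k with
    | zero => simpa using h
    | succ k ih =>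
      intro t ht
      rw [pow_succ', ← mulVec_mulVec]
      exact (hasDerivAt_pi.1 (hasDerivAt_exp_smul_mulVec A _ t) i).unique
        ((hasDerivAt_const t 0).congr_of_eventuallyEq (eventually_of_mem (Ioi_mem_nhds ht) ih))
  have hcl := (hpos k).closure ((continuous_apply i).comp (continuous_exp_smul_mulVec A _))
    continuous_const
  simpa using hcl (by simp : (0 : ℝ) ∈ closure (Ioi 0))

lemma transpose_exp_smul_mul_mul_exp_smul {A S : Matrix ι ι ℝ} (hS : IsUnit S)
    (hAS : Aᵀ * S = -(S * A)) (t : ℝ) :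
    (exp (t • A))ᵀ * S * exp (t • A) = S := by
  have hSdet : IsUnit S.det := (isUnit_iff_isUnit_det S).1 hS
  -- `Aᵀ = S (-A) S⁻¹`, so the transposed flow is conjugate to the backward flow
  have hconj : (t • A)ᵀ = S * -(t • A) * S⁻¹ := by
    rw [transpose_smul, mul_neg, neg_mul, Matrix.mul_smul, Matrix.smul_mul, ← smul_neg, ← neg_mul,
      ← hAS, mul_nonsing_inv_cancel_right _ _ hSdet]
  have hexp : IsUnit (exp (t • A)).det := (isUnit_iff_isUnit_det _).1 (isUnit_exp _)
  rw [← exp_transpose, hconj, exp_conj _ _ hS, Matrix.exp_neg, mul_assoc _ S⁻¹,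
    nonsing_inv_mul _ hSdet, mul_one, mul_assoc, nonsing_inv_mul _ hexp, mul_one]

lemma eq_zero_of_forall_pow_mulVec_apply_eq_zero {V : Matrix ι ι ℝ} (hV : V.IsSymm) {i : ι}
    (hspan : Submodule.span ℝ (range fun k : ℕ => (V ^ k) *ᵥ Pi.single i 1) = ⊤)
    {p : ι → ℝ} (h : ∀ k : ℕ, (V ^ k *ᵥ p) i = 0) : p = 0 := by
  have horth : dotProductBilin ℝ ℝ p = 0 := LinearMap.ext_on_range hspan fun k => by
    rw [dotProductBilin_apply_apply, dotProduct_mulVec, ← mulVec_transpose, (hV.pow k).eq,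
      dotProduct_single, mul_one, h, LinearMap.zero_apply]
  simpa [dotProduct_self_eq_zero] using LinearMap.congr_fun horth p

variable {A : Matrix ι ι ℝ} {K : ℝ} {ρ : ℝ → ℝ}

lemma sq_exp_smul_mulVec_apply_le
    (hK : ∀ (t : ℝ) (ψ : ι → ℝ), ‖exp (t • A) *ᵥ ψ‖ ^ 2 ≤ K * ‖ψ‖ ^ 2)
    (t : ℝ) (ψ : ι → ℝ) (i : ι) : (exp (t • A) *ᵥ ψ) i ^ 2 ≤ K * ‖ψ‖ ^ 2 :=
  (sq_le_sq.2 (by simpa using norm_le_pi_norm (exp (t • A) *ᵥ ψ) i)).trans (hK t ψ)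

lemma integrableOn_sq_exp_smul_mulVec_apply_mul
    (hK : ∀ (t : ℝ) (ψ : ι → ℝ), ‖exp (t • A) *ᵥ ψ‖ ^ 2 ≤ K * ‖ψ‖ ^ 2)
    (hρ : IntegrableOn ρ (Ioi 0)) (ψ : ι → ℝ) (i : ι) :
    IntegrableOn (fun t => (exp (t • A) *ᵥ ψ) i ^ 2 * ρ t) (Ioi 0) := by
  refine (hρ.norm.const_mul (K * ‖ψ‖ ^ 2)).mono'
    ((((continuous_apply i).comp (continuous_exp_smul_mulVec A ψ)).pow 2).aestronglyMeasurable.mul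
      hρ.aestronglyMeasurable) (Eventually.of_forall fun t => ?_)
  rw [norm_mul, Real.norm_of_nonneg (sq_nonneg _)]
  gcongr
  exact sq_exp_smul_mulVec_apply_le hK t ψ i

lemma continuous_setIntegral_sq_exp_smul_mulVec_apply_mul (hK₀ : 0 ≤ K)
    (hK : ∀ (t : ℝ) (ψ : ι → ℝ), ‖exp (t • A) *ᵥ ψ‖ ^ 2 ≤ K * ‖ψ‖ ^ 2)
    (hρ : IntegrableOn ρ (Ioi 0)) (i : ι) :
    Continuous fun ψ : ι → ℝ => ∫ t in Ioi 0, (exp (t • A) *ᵥ ψ) i ^ 2 * ρ t := by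
  refine continuous_iff_continuousAt.2 fun ψ₀ => continuousAt_of_dominated
    (bound := fun t => K * (‖ψ₀‖ + 1) ^ 2 * ‖ρ t‖)
    (Eventually.of_forall fun ψ => (integrableOn_sq_exp_smul_mulVec_apply_mul hK hρ ψ i).1)
    ?_ (hρ.norm.const_mul _) (Eventually.of_forall fun t => by fun_prop)
  filter_upwards [Metric.ball_mem_nhds ψ₀ one_pos] with ψ hψ
  refine Eventually.of_forall fun t => ?_
  have hψ' : ‖ψ‖ ≤ ‖ψ₀‖ + 1 := by
    linarith [norm_le_norm_add_norm_sub' ψ ψ₀, mem_ball_iff_norm.1 hψ]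
  rw [norm_mul, Real.norm_of_nonneg (sq_nonneg _)]
  gcongr
  calc (exp (t • A) *ᵥ ψ) i ^ 2 ≤ K * ‖ψ‖ ^ 2 := sq_exp_smul_mulVec_apply_le hK t ψ i
    _ ≤ K * (‖ψ₀‖ + 1) ^ 2 := by gcongr

end MatrixFlow

noncomputable def energyMatrix (M : ℝ) (V : Matrix (Fin n) (Fin n) ℝ) :
    Matrix (Fin n ⊕ Fin n) (Fin n ⊕ Fin n) ℝ :=
  fromBlocks V 0 0 ((1 / M) • 1)

section Hamiltonian

variable {M : ℝ} {V : Matrix (Fin n) (Fin n) ℝ}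

lemma energy_eq_dotProduct (ψ : Fin n ⊕ Fin n → ℝ) :
    energy M V ψ = 1 / 2 * (ψ ⬝ᵥ energyMatrix M V *ᵥ ψ) := by
  simp only [energy, energyMatrix, fromBlocks_mulVec, dotProduct, Fintype.sum_sum_type,
    Sum.elim_inl, Sum.elim_inr, zero_mulVec, add_zero, zero_add, smul_mulVec, one_mulVec,
    Pi.smul_apply, smul_eq_mul, Function.comp_def, mul_add, Finset.mul_sum]
  rw [add_comm]
  congr 1
  exact Finset.sum_congr rfl fun i _ => by ring

lemma energy_smul (c : ℝ) (ψ : Fin n ⊕ Fin n → ℝ) :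
    energy M V (c • ψ) = c ^ 2 * energy M V ψ := by
  simp only [energy_eq_dotProduct, mulVec_smul, smul_dotProduct, dotProduct_smul, smul_eq_mul]
  ring

lemma continuous_energy : Continuous (energy M V) := by
  unfold energy
  fun_prop

lemma energy_pos (hM : 0 < M) (hV : V.PosDef) {ψ : Fin n ⊕ Fin n → ℝ} (hψ : ψ ≠ 0) :
    0 < energy M V ψ := by
  set q : Fin n → ℝ := fun i => ψ (Sum.inl i)
  have hVq : 0 ≤ q ⬝ᵥ V *ᵥ q := by simpa using hV.posSemidef.dotProduct_mulVec_nonneg q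
  have hp : 0 ≤ ∑ i, ψ (Sum.inr i) ^ 2 := by positivity
  unfold energy
  by_cases hq : q = 0
  · obtain ⟨i, hi⟩ : ∃ i, ψ (Sum.inr i) ≠ 0 := by
      by_contra! h
      exact hψ (funext fun j => j.casesOn (congrFun hq) h)
    have : 0 < ∑ i, ψ (Sum.inr i) ^ 2 :=
      Finset.sum_pos' (fun j _ => sq_nonneg _) ⟨i, Finset.mem_univ i, by positivity⟩
    positivity
  · have : 0 < q ⬝ᵥ V *ᵥ q := by simpa using hV.dotProduct_mulVec_pos hq
    positivity

lemma isUnit_energyMatrix (hM : M ≠ 0) (hV : IsUnit V) : IsUnit (energyMatrix M V) := by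
  rw [isUnit_iff_isUnit_det, energyMatrix, det_fromBlocks_zero₂₁, det_smul, det_one, mul_one]
  exact ((isUnit_iff_isUnit_det V).1 hV).mul (by simp [hM])

lemma transpose_hamMatrix_mul_energyMatrix (hV : V.IsSymm) :
    (hamMatrix M V)ᵀ * energyMatrix M V = -(energyMatrix M V * hamMatrix M V) := by
  simp only [hamMatrix, energyMatrix, fromBlocks_transpose, fromBlocks_multiply, fromBlocks_neg]
  congr 1 <;> simp [hV.eq]

lemma energy_exp_smul_hamMatrix_mulVec (hM : M ≠ 0) (hV : V.PosDef) (t : ℝ)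
    (ψ : Fin n ⊕ Fin n → ℝ) : energy M V (exp (t • hamMatrix M V) *ᵥ ψ) = energy M V ψ := by
  rw [energy_eq_dotProduct, energy_eq_dotProduct, dotProduct_mulVec_mulVec_transpose,
    transpose_exp_smul_mul_mul_exp_smul (isUnit_energyMatrix hM hV.isUnit)
      (transpose_hamMatrix_mul_energyMatrix (isHermitian_iff_isSymm.1 hV.isHermitian))]

lemma exists_sq_norm_exp_smul_hamMatrix_mulVec_le (hM : 0 < M) (hV : V.PosDef) :
    ∃ K : ℝ, 0 ≤ K ∧ ∀ (t : ℝ) (ψ : Fin n ⊕ Fin n → ℝ),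
      ‖exp (t • hamMatrix M V) *ᵥ ψ‖ ^ 2 ≤ K * ‖ψ‖ ^ 2 := by
  have hnorm_smul (c : ℝ) (ψ : Fin n ⊕ Fin n → ℝ) : ‖c • ψ‖ ^ 2 = c ^ 2 * ‖ψ‖ ^ 2 := by
    rw [norm_smul, mul_pow, Real.norm_eq_abs, sq_abs]
  have hcont : Continuous fun ψ : Fin n ⊕ Fin n → ℝ => ‖ψ‖ ^ 2 := by fun_prop
  obtain ⟨r₁, hr₁, hle₁⟩ := exists_pos_mul_le_of_sq_homogeneous continuous_energy hcont
    energy_smul hnorm_smul fun ψ hψ => energy_pos hM hV hψ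
  obtain ⟨r₂, hr₂, hle₂⟩ := exists_pos_mul_le_of_sq_homogeneous hcont continuous_energy
    hnorm_smul energy_smul fun ψ hψ => by positivity
  refine ⟨1 / (r₁ * r₂), by positivity, fun t ψ => ?_⟩
  set u := exp (t • hamMatrix M V) *ᵥ ψ
  rw [div_mul_eq_mul_div, one_mul, le_div_iff₀ (by positivity)]
  calc ‖u‖ ^ 2 * (r₁ * r₂) = r₂ * (r₁ * ‖u‖ ^ 2) := by ring
    _ ≤ r₂ * energy M V u := by gcongr; exact hle₁ u
    _ = r₂ * energy M V ψ := by rw [energy_exp_smul_hamMatrix_mulVec hM.ne' hV]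
    _ ≤ ‖ψ‖ ^ 2 := hle₂ ψ

lemma hamMatrix_sq : hamMatrix M V ^ 2 = (-(1 / M)) • fromBlocks V 0 0 V := by
  rw [sq, hamMatrix, fromBlocks_multiply, fromBlocks_smul]
  congr 1 <;> simp

lemma hamMatrix_pow_two_mul_mulVec_inr (k : ℕ) (ψ : Fin n ⊕ Fin n → ℝ) (i : Fin n) :
    (hamMatrix M V ^ (2 * k) *ᵥ ψ) (Sum.inr i) = (-(1 / M)) ^ k * (V ^ k *ᵥ (ψ ∘ Sum.inr)) i := by
  rw [pow_mul, hamMatrix_sq, smul_pow, fromBlocks_diagonal_pow, smul_mulVec, fromBlocks_mulVec]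
  simp

lemma hamMatrix_mulVec_inr (ψ : Fin n ⊕ Fin n → ℝ) :
    (hamMatrix M V *ᵥ ψ) ∘ Sum.inr = -(V *ᵥ (ψ ∘ Sum.inl)) := by
  ext i
  simp [hamMatrix, fromBlocks_mulVec, neg_mulVec]

lemma eq_zero_of_forall_hamMatrix_pow_mulVec_inr_eq_zero (hM : M ≠ 0) (hV : V.PosDef) {i : Fin n}
    (hspan : Submodule.span ℝ (range fun k : ℕ => (V ^ k) *ᵥ Pi.single i 1) = ⊤)
    {ψ : Fin n ⊕ Fin n → ℝ} (h : ∀ k : ℕ, (hamMatrix M V ^ k *ᵥ ψ) (Sum.inr i) = 0) : ψ = 0 := by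
  have hVsymm : V.IsSymm := isHermitian_iff_isSymm.1 hV.isHermitian
  have hp : ψ ∘ Sum.inr = 0 := eq_zero_of_forall_pow_mulVec_apply_eq_zero hVsymm hspan fun k => by
    simpa [hamMatrix_pow_two_mul_mulVec_inr, hM] using h (2 * k)
  have hVq : V *ᵥ (ψ ∘ Sum.inl) = 0 :=
    eq_zero_of_forall_pow_mulVec_apply_eq_zero hVsymm hspan fun k => by
      simpa [pow_succ, ← mulVec_mulVec, hamMatrix_pow_two_mul_mulVec_inr, hamMatrix_mulVec_inr,
        mulVec_neg, hM] using h (2 * k + 1)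
  have hq : ψ ∘ Sum.inl = 0 :=
    mulVec_injective_iff_isUnit.2 hV.isUnit (hVq.trans (mulVec_zero V).symm)
  exact funext fun j => j.casesOn (congrFun hq) (congrFun hp)

end Hamiltonian

lemma Delta_eq_setIntegral_sq (hn : 0 < n) (M : ℝ) (V : Matrix (Fin n) (Fin n) ℝ)
    (ρ : ℝ → ℝ) :
    Delta hn M V ρ = fun ψ =>
      ∫ t in Ioi 0, (exp (t • hamMatrix M V) *ᵥ ψ) (Sum.inr ⟨0, hn⟩) ^ 2 * ρ t := by
  ext ψ
  simp [Delta, dotProduct_single]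

lemma Delta_smul (hn : 0 < n) (M : ℝ) (V : Matrix (Fin n) (Fin n) ℝ) (ρ : ℝ → ℝ) (c : ℝ)
    (ψ : Fin n ⊕ Fin n → ℝ) : Delta hn M V ρ (c • ψ) = c ^ 2 * Delta hn M V ρ ψ := by
  simp only [Delta_eq_setIntegral_sq, mulVec_smul, Pi.smul_apply, smul_eq_mul, mul_pow,
    mul_assoc, integral_const_mul]

theorem Delta_posdef_general (hn : 0 < n) (M : ℝ) (hM : 0 < M)
    (V : Matrix (Fin n) (Fin n) ℝ) (hV : V.PosDef)
    (hcompl : Submodule.span ℝ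
        (Set.range fun k : ℕ => (V ^ k).mulVec (Pi.single (⟨0, hn⟩ : Fin n) 1)) = ⊤)
    (ρ : ℝ → ℝ) (hρpos : ∀ t, 0 < t → 0 < ρ t)
    (hρint : ∫ t, ρ t = 1) :
    (∀ ψ : (Fin n ⊕ Fin n) → ℝ, Delta hn M V ρ ψ = 0 → ψ = 0) ∧
      ∃ r : ℝ, 0 < r ∧ ∀ ψ : (Fin n ⊕ Fin n) → ℝ,
        r * energy M V ψ ≤ Delta hn M V ρ ψ := by
  have hρ : IntegrableOn ρ (Ioi 0) :=
    (Integrable.of_integral_ne_zero (by simp [hρint])).integrableOn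
  obtain ⟨K, hK₀, hK⟩ := exists_sq_norm_exp_smul_hamMatrix_mulVec_le hM hV
  have hDelta_eq_zero (ψ : Fin n ⊕ Fin n → ℝ) (h0 : Delta hn M V ρ ψ = 0) : ψ = 0 := by
    rw [Delta_eq_setIntegral_sq] at h0
    have hvanish := eqOn_zero_of_setIntegral_sq_mul_eq_zero isOpen_Ioi
      ((continuous_apply _).comp (continuous_exp_smul_mulVec _ ψ)).continuousOn hρpos
      (integrableOn_sq_exp_smul_mulVec_apply_mul hK hρ ψ _) h0
    exact eq_zero_of_forall_hamMatrix_pow_mulVec_inr_eq_zero hM.ne' hV hcompl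
      (pow_mulVec_apply_eq_zero_of_eqOn_Ioi hvanish)
  have hDelta_pos (ψ : Fin n ⊕ Fin n → ℝ) (hψ : ψ ≠ 0) : 0 < Delta hn M V ρ ψ :=
    (setIntegral_nonneg measurableSet_Ioi fun t ht => mul_nonneg (sq_nonneg _)
      (hρpos t ht).le).lt_of_ne' (mt (hDelta_eq_zero ψ) hψ)
  have hDelta_cont : Continuous (Delta hn M V ρ) := by
    rw [Delta_eq_setIntegral_sq]
    exact continuous_setIntegral_sq_exp_smul_mulVec_apply_mul hK₀ hK hρ _
  exact ⟨hDelta_eq_zero, exists_pos_mul_le_of_sq_homogeneous hDelta_cont continuous_energy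
    (Delta_smul hn M V ρ) energy_smul hDelta_pos⟩

/-- If `V` is symmetric positive definite with the completeness property and `ρ` is a
probability density strictly positive on `(0,∞)`, then `Δ` is a positive definite quadratic
form: `Δ(ψ) = 0` implies `ψ = 0`, and there is `r > 0` with `Δ(ψ) ≥ r·H(ψ)` for all `ψ`. -/
theorem Delta_posdef (hn : 0 < n) (M : ℝ) (hM : 0 < M)
    (V : Matrix (Fin n) (Fin n) ℝ) (hV : V.PosDef)
    (hcompl : Submodule.span ℝ
        (Set.range fun k : ℕ => (V ^ k).mulVec (Pi.single (⟨0, hn⟩ : Fin n) 1)) = ⊤)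
    (ρ : ℝ → ℝ) (hρmeas : Measurable ρ) (hρpos : ∀ t, 0 < t → 0 < ρ t)
    (hρzero : ∀ t, t ≤ 0 → ρ t = 0) (hρint : ∫ t, ρ t = 1) :
    (∀ ψ : (Fin n ⊕ Fin n) → ℝ, Delta hn M V ρ ψ = 0 → ψ = 0) ∧
      ∃ r : ℝ, 0 < r ∧ ∀ ψ : (Fin n ⊕ Fin n) → ℝ,
        r * energy M V ψ ≤ Delta hn M V ρ ψ :=
  Delta_posdef_general hn M hM V hV hcompl ρ hρpos hρint
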